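/- For the set P = {(a,b) ∈ ℝ² : a ≤ 0 and ab ≥ 0}, the ℓ1-distance satisfies d(x, P) = (x₁)⁺ + (min(−x₁, x₂))⁺ for every x = (x₁, x₂) ∈ ℝ². -/
import Mathlib


noncomputable def dl1 (x : ℝ × ℝ) (A : Set (ℝ × ℝ)) : ℝ :=
  sInf ((fun y => |x.1 - y.1| + |x.2 - y.2|) '' A)

def P : Set (ℝ × ℝ) := {p | p.1 ≤ 0 ∧ p.1 * p.2 ≥ 0}

theorem dist_P (x : ℝ × ℝ) :
    dl1 x P = max 0 x.1 + max 0 (min (-x.1) x.2) := by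
  unfold dl1
  set f : ℝ × ℝ → ℝ := fun y => |x.1 - y.1| + |x.2 - y.2| with hf
  have hbdd : BddBelow (f '' P) := by
    refine ⟨0, ?_⟩
    rintro z ⟨y, _, rfl⟩
    positivity
  apply le_antisymm
  · -- find witness
    have hw : ∃ y ∈ P, f y = max 0 x.1 + max 0 (min (-x.1) x.2) := by
      rcases le_or_gt 0 x.1 with h1 | h1
      · refine ⟨(0, x.2), ⟨le_refl 0, by simp [P]⟩, ?_⟩
        simp only [hf]
        rw [max_eq_right h1]
        have hmin : max 0 (min (-x.1) x.2) = 0 :=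
          max_eq_left (by linarith [min_le_left (-x.1) x.2])
        rw [hmin]
        simp [abs_of_nonneg h1]
      · rcases le_or_gt x.2 0 with h2 | h2
        · refine ⟨x, ⟨h1.le, by nlinarith⟩, ?_⟩
          have hmax1 : max 0 x.1 = 0 := max_eq_left h1.le
          have hmax2 : max 0 (min (-x.1) x.2) = 0 :=
            max_eq_left (le_trans (min_le_right _ _) h2)
          simp [hf, hmax1, hmax2]
        · rcases le_or_gt (-x.1) x.2 with h3 | h3
          · refine ⟨(0, x.2), ⟨le_refl 0, by simp [P]⟩, ?_⟩
            have hmax1 : max 0 x.1 = 0 := max_eq_left h1.le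
            have hmin : min (-x.1) x.2 = -x.1 := min_eq_left h3
            have hmax2 : max 0 (min (-x.1) x.2) = -x.1 := by
              rw [hmin]; exact max_eq_right (by linarith)
            simp only [hf, hmax1, hmax2]
            rw [abs_of_nonpos (by linarith : x.1 - 0 ≤ 0)]
            simp
          · refine ⟨(x.1, 0), ⟨h1.le, by simp⟩, ?_⟩
            have hmax1 : max 0 x.1 = 0 := max_eq_left h1.le
            have hmin : min (-x.1) x.2 = x.2 := min_eq_right h3.le
            have hmax2 : max 0 (min (-x.1) x.2) = x.2 := by
              rw [hmin]; exact max_eq_right h2.le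
            simp only [hf, hmax1, hmax2]
            rw [abs_of_nonneg (by linarith : (0:ℝ) ≤ x.2 - 0)]
            simp
    obtain ⟨y, hyP, hval⟩ := hw
    rw [← hval]
    exact csInf_le hbdd ⟨y, hyP, rfl⟩
  · apply le_csInf (⟨f (-1, -1), ⟨(-1, -1), ⟨by norm_num, by norm_num⟩, rfl⟩⟩ : (f '' P).Nonempty)
    rintro z ⟨y, ⟨hy1, hy2⟩, rfl⟩
    have hA : max 0 x.1 ≤ |x.1 - y.1| := by
      rcases le_or_gt x.1 0 with h | h
      · simp only [max_eq_left h]; exact abs_nonneg _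
      · rw [max_eq_right h.le]
        calc x.1 ≤ x.1 - y.1 := by linarith
          _ ≤ |x.1 - y.1| := le_abs_self _
    rcases le_or_gt (min (-x.1) x.2) 0 with hm | hm
    · rw [max_eq_left hm]
      simp only [add_zero]
      exact le_trans hA (le_add_of_nonneg_right (abs_nonneg _))
    · have hx1 : x.1 < 0 := by
        have := lt_of_lt_of_le hm (min_le_left _ _); linarith
      have hx2 : 0 < x.2 := lt_of_lt_of_le hm (min_le_right _ _)
      rw [max_eq_left hx1.le, max_eq_right hm.le, zero_add]
      rcases eq_or_lt_of_le hy1 with h0 | h0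
      · have : min (-x.1) x.2 ≤ -x.1 := min_le_left _ _
        calc min (-x.1) x.2 ≤ -x.1 := this
          _ = -(x.1 - y.1) := by rw [h0]; ring
          _ ≤ |x.1 - y.1| := neg_le_abs _
          _ ≤ _ := le_add_of_nonneg_right (abs_nonneg _)
      · have hy2' : y.2 ≤ 0 := by
          by_contra hc
          push_neg at hc
          nlinarith
        calc min (-x.1) x.2 ≤ x.2 := min_le_right _ _
          _ ≤ x.2 - y.2 := by linarith
          _ ≤ |x.2 - y.2| := le_abs_self _
          _ ≤ _ := le_add_of_nonneg_left (abs_nonneg _)
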